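/- If L is a distributive lattice and U ⊆ L is a filter, then the Pierce congruence R^U is a lattice congruence, i.e., it also respects binary meets: (a,a') ∈ R^U implies (a∧b, a'∧b) ∈ R^U for all b. -/
import Mathlib

/-- The Pierce relation `R^U` on a lattice, for a subset `U`. -/
def PierceRel {α : Type*} [Lattice α] (U : Set α) (a a' : α) : Prop :=
  ∀ x : α, x ⊔ a ∈ U ↔ x ⊔ a' ∈ U

/-- If `L` is a distributive lattice and `U` a filter (a nonempty up-set closed
under meets), then the Pierce congruence `R^U` also respects binary meets. -/
theorem pierceRel_lattice_congruence {α : Type*} [DistribLattice α] (U : Set α)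
    (hup : IsUpperSet U) (hne : U.Nonempty)
    (hmeet : ∀ a ∈ U, ∀ b ∈ U, a ⊓ b ∈ U) :
    ∀ a a' b : α, PierceRel U a a' → PierceRel U (a ⊓ b) (a' ⊓ b) := by
  intro a a' b h x
  have key : ∀ c : α, x ⊔ (c ⊓ b) ∈ U ↔ (x ⊔ c ∈ U ∧ x ⊔ b ∈ U) := by
    intro c
    rw [sup_inf_left]
    constructor
    · intro hm
      exact ⟨hup inf_le_left hm, hup inf_le_right hm⟩
    · intro ⟨h1, h2⟩
      exact hmeet _ h1 _ h2
  rw [key, key, h x]
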